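/- Let G be a weighted graph on finite vertex set V, let B ⊆ V be a nonempty proper subset of V, and let e be an edge of G joining vertices u and v with weight w_e. Let G' be the weighted graph obtained from G by deleting the edge e and adding a new vertex x together with two new edges {u,x} and {x,v} of weights w₁ > 0 and w₂ > 0 satisfying 1/w₁ + 1/w₂ = 1/w_e. Then the Schur complement of the weighted Laplacian L(G') with respect to B equals the Schur complement of the weighted Laplacian L(G) with respect to B. -/

import Mathlib

open Finset Matrix

/-- The weighted Laplacian of a graph `G` with edge weights `w`. -/
def weightedLaplacian {V : Type*} [Fintype V] [DecidableEq V]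
    (G : SimpleGraph V) [DecidableRel G.Adj] (w : V → V → ℝ) : Matrix V V ℝ :=
  Matrix.of fun i j =>
    if i = j then ∑ k ∈ Finset.univ.filter (G.Adj i ·), w i k
    else if G.Adj i j then - w i j else 0

/-- The Schur complement of a matrix `M` with respect to a set of indices `B`, i.e.
`D̂ - (top right block) * (lower right block)⁻¹ * (bottom left block)` for the block
decomposition of `M` given by `B` and its complement. -/
noncomputable def schurCompl {V : Type*} [Fintype V] [DecidableEq V] (M : Matrix V V ℝ)
    (B : Set V) [DecidablePred (· ∈ B)] : Matrix B B ℝ :=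
  M.submatrix (fun i : B => (i : V)) (fun j : B => (j : V)) -
    (Matrix.of fun (i : B) (c : {x : V // x ∉ B}) => M i c) *
      (M.submatrix (fun c : {x : V // x ∉ B} => (c : V))
        (fun c : {x : V // x ∉ B} => (c : V)))⁻¹ *
      (Matrix.of fun (c : {x : V // x ∉ B}) (j : B) => M c j)

/-- The graph obtained from `G` by subdividing the edge between `u` and `v`:
the edge `{u, v}` is removed and a new vertex (`none`) is joined to both `u` and `v`. -/
def subdivide {V : Type*} (G : SimpleGraph V) (u v : V) : SimpleGraph (Option V) where
  Adj a b :=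
    match a, b with
    | some a', some b' => G.Adj a' b' ∧ ¬(a' = u ∧ b' = v) ∧ ¬(a' = v ∧ b' = u)
    | some a', none => a' = u ∨ a' = v
    | none, some b' => b' = u ∨ b' = v
    | none, none => False
  symm := by
    constructor
    intro a b h
    match a, b with
    | some a', some b' => exact ⟨h.1.symm, fun hc => h.2.2 ⟨hc.2, hc.1⟩,
        fun hc => h.2.1 ⟨hc.2, hc.1⟩⟩
    | some a', none => exact h
    | none, some b' => exact h
  loopless := by
    constructor
    intro a
    match a with
    | some a' => exact fun h => G.irrefl h.1
    | none => exact fun h => h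

instance {V : Type*} [DecidableEq V] (G : SimpleGraph V) [DecidableRel G.Adj] (u v : V) :
    DecidableRel (subdivide G u v).Adj := fun a b =>
  match a, b with
  | some a', some b' =>
      inferInstanceAs (Decidable (G.Adj a' b' ∧ ¬(a' = u ∧ b' = v) ∧ ¬(a' = v ∧ b' = u)))
  | some a', none => inferInstanceAs (Decidable (a' = u ∨ a' = v))
  | none, some b' => inferInstanceAs (Decidable (b' = u ∨ b' = v))
  | none, none => inferInstanceAs (Decidable False)

/-- The image of a set of vertices in the vertex set of the subdivided graph. -/
def liftSet {V : Type*} (B : Set V) : Set (Option V) := {y | ∃ x ∈ B, y = some x}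

instance {V : Type*} (B : Set V) [DecidablePred (· ∈ B)] :
    DecidablePred (· ∈ liftSet B) := fun y =>
  match y with
  | none => isFalse (by simp [liftSet])
  | some a => decidable_of_iff (a ∈ B) (by simp [liftSet])

/-!
Eliminating the new vertex `x` from `L(G')`, i.e. taking the Schur complement onto `V`, gives back
`L(G)`: the column of `L(G')` at `x` is `-(w₁ e_u + w₂ e_v)`, and the rank-one correction
`(w₁ e_u + w₂ e_v)(w₁ e_u + w₂ e_v)ᵀ / (w₁ + w₂)` restores the edge `uv` with weight
`w₁ w₂ / (w₁ + w₂) = w_e` (the diagonal follows because all row sums vanish).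

Schur complements compose, so eliminating `Bᶜ ∪ {x}` at once is the same as eliminating `x`
first. We see this through harmonic extensions: `S f = (M g)|_B` for every `g` extending `f` with
`M g = 0` off `B`, and a harmonic extension for `L(G)` becomes one for `L(G')` once its value at
`x` is the one forced by the row of `x`. The block of `L(G)` off `B` is invertible by the maximum
principle on the connected graph `G`.
-/

section Schur

variable {V : Type*} [Fintype V] (M : Matrix V V ℝ) (B : Set V) [DecidablePred (· ∈ B)]

abbrev complBlock : Matrix {x // x ∉ B} {x // x ∉ B} ℝ := M.submatrix Subtype.val Subtype.val

theorem mulVec_apply_eq_sum_add_sum_compl (g : V → ℝ) (a : V) :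
    (M *ᵥ g) a = ∑ i : B, M a i * g i + ∑ c : {x // x ∉ B}, M a c * g c :=
  (Fintype.sum_subtype_add_sum_subtype (· ∈ B) fun b => M a b * g b).symm

theorem mulVec_apply_eq_sum_compl {g : V → ℝ} (hg : ∀ b ∈ B, g b = 0) (a : V) :
    (M *ᵥ g) a = ∑ c : {x // x ∉ B}, M a c * g c := by
  simp [mulVec_apply_eq_sum_add_sum_compl M B, hg]

variable [DecidableEq V]

theorem det_complBlock_ne_zero_iff :
    (complBlock M B).det ≠ 0 ↔
      ∀ y : V → ℝ, (∀ b ∈ B, y b = 0) → (∀ a ∉ B, (M *ᵥ y) a = 0) → y = 0 := by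
  rw [Ne, ← exists_mulVec_eq_zero_iff]
  constructor
  · intro hker y hyB hy
    have hyC : (fun c : {x // x ∉ B} => y c) = 0 := by
      by_contra hne
      refine hker ⟨_, hne, funext fun c => ?_⟩
      rw [Pi.zero_apply, ← hy c c.2, mulVec_apply_eq_sum_compl M B hyB]
      rfl
    funext a
    by_cases ha : a ∈ B
    · exact hyB a ha
    · exact congrFun hyC ⟨a, ha⟩
  · rintro hker ⟨x, hx0, hx⟩
    set y : V → ℝ := fun a => if h : a ∈ B then 0 else x ⟨a, h⟩
    have hyB : ∀ b ∈ B, y b = 0 := fun b hb => dif_pos hb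
    have hyx : ∀ c : {x // x ∉ B}, y c = x c := fun c => dif_neg c.2
    refine hx0 (funext fun c => ?_)
    rw [← hyx, hker y hyB fun a ha => ?_]
    · rfl
    rw [mulVec_apply_eq_sum_compl M B hyB]
    simp only [hyx]
    exact congrFun hx ⟨a, ha⟩

variable {M B}

theorem schurCompl_mulVec_of_mulVec_eq_zero (hP : (complBlock M B).det ≠ 0) {g : V → ℝ}
    (hg : ∀ a ∉ B, (M *ᵥ g) a = 0) :
    schurCompl M B *ᵥ (fun i : B => g i) = fun i : B => (M *ᵥ g) i := by
  set P := complBlock M B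
  set Cm : Matrix {x // x ∉ B} B ℝ := of fun c j => M c j
  have hC : Cm *ᵥ (fun i : B => g i) + P *ᵥ (fun c : {x // x ∉ B} => g c) = 0 :=
    funext fun c => by rw [Pi.zero_apply, ← hg c c.2, mulVec_apply_eq_sum_add_sum_compl M B]; rfl
  have hgC : P⁻¹ *ᵥ (Cm *ᵥ fun i : B => g i) = -fun c : {x // x ∉ B} => g c := by
    rw [eq_neg_of_add_eq_zero_left hC, mulVec_neg, mulVec_mulVec,
      nonsing_inv_mul P (isUnit_iff_ne_zero.2 hP), one_mulVec]
  have hS : schurCompl M B = M.submatrix (fun i : B => (i : V)) (fun j : B => (j : V)) -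
      (of fun (i : B) (c : {x // x ∉ B}) => M i c) * P⁻¹ * Cm := rfl
  funext i
  rw [mulVec_apply_eq_sum_add_sum_compl M B, hS, sub_mulVec, ← mulVec_mulVec, ← mulVec_mulVec,
    hgC, mulVec_neg, sub_neg_eq_add]
  rfl

theorem exists_mulVec_eq_zero_of_restrict_eq (hP : (complBlock M B).det ≠ 0) (f : B → ℝ) :
    ∃ g : V → ℝ, (∀ i : B, g i = f i) ∧ ∀ a ∉ B, (M *ᵥ g) a = 0 := by
  set P := complBlock M B
  set Cm : Matrix {x // x ∉ B} B ℝ := of fun c j => M c j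
  set h := -(P⁻¹ *ᵥ (Cm *ᵥ f))
  have hPh : Cm *ᵥ f + P *ᵥ h = 0 := by
    rw [mulVec_neg, mulVec_mulVec, mul_nonsing_inv P (isUnit_iff_ne_zero.2 hP), one_mulVec,
      add_neg_cancel]
  set g : V → ℝ := fun a => if ha : a ∈ B then f ⟨a, ha⟩ else h ⟨a, ha⟩
  have hgB : ∀ i : B, g i = f i := fun i => dif_pos i.2
  have hgC : ∀ c : {x // x ∉ B}, g c = h c := fun c => dif_neg c.2
  refine ⟨g, hgB, fun a ha => ?_⟩
  have hPh_a := congrFun hPh ⟨a, ha⟩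
  rw [Pi.zero_apply] at hPh_a
  rw [mulVec_apply_eq_sum_add_sum_compl M B, ← hPh_a]
  simp only [hgB, hgC]
  rfl

theorem schurCompl_apply_eq_mulVec (hP : (complBlock M B).det ≠ 0) {g : V → ℝ}
    (hg : ∀ a ∉ B, (M *ᵥ g) a = 0) {j : B}
    (hgB : ∀ k : B, g k = (Pi.single j 1 : B → ℝ) k) (i : B) :
    schurCompl M B i j = (M *ᵥ g) i := by
  simpa [funext hgB, mulVec_single_one] using congrFun (schurCompl_mulVec_of_mulVec_eq_zero hP hg) i

end Schur

section Laplacian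

variable {V : Type*} [Fintype V] [DecidableEq V] {G : SimpleGraph V} [DecidableRel G.Adj]
  {w : V → V → ℝ}

theorem weightedLaplacian_mulVec_apply (y : V → ℝ) (a : V) :
    (weightedLaplacian G w *ᵥ y) a = ∑ k ∈ univ.filter (G.Adj a ·), w a k * (y a - y k) := by
  have hrow : ∀ k, weightedLaplacian G w a k * y k =
      (if a = k then (∑ k ∈ univ.filter (G.Adj a ·), w a k) * y a else 0) -
        if G.Adj a k then w a k * y k else 0 := by
    intro k
    by_cases hak : a = k
    · subst hak; simp [weightedLaplacian]
    · by_cases hadj : G.Adj a k <;> simp [weightedLaplacian, hak, hadj]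
  simp only [mulVec, dotProduct, hrow, sum_sub_distrib, sum_ite_eq, mem_univ, if_true,
    ← sum_filter, sum_mul, mul_sub]

theorem weightedLaplacian_sum_row (a : V) : ∑ b, weightedLaplacian G w a b = 0 := by
  simpa [mulVec, dotProduct] using weightedLaplacian_mulVec_apply (G := G) (w := w) (fun _ => 1) a

theorem eq_of_weightedLaplacian_mulVec_eq_zero_of_isMax (hpos : ∀ a b, G.Adj a b → 0 < w a b)
    {y : V → ℝ} {a : V} (ha : (weightedLaplacian G w *ᵥ y) a = 0) (hmax : ∀ k, y k ≤ y a)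
    {b : V} (hab : G.Adj a b) : y b = y a := by
  rw [weightedLaplacian_mulVec_apply] at ha
  have hterm := (sum_eq_zero_iff_of_nonneg fun k hk => mul_nonneg (hpos a k (mem_filter.1 hk).2).le
    (sub_nonneg.2 (hmax k))).1 ha b (mem_filter.2 ⟨mem_univ b, hab⟩)
  have := (mul_eq_zero.1 hterm).resolve_left (hpos a b hab).ne'
  linarith

theorem nonpos_of_weightedLaplacian_mulVec_eq_zero (hconn : G.Connected)
    (hpos : ∀ a b, G.Adj a b → 0 < w a b) {B : Set V} (hB : B.Nonempty) {y : V → ℝ}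
    (hyB : ∀ b ∈ B, y b = 0) (hy : ∀ a ∉ B, (weightedLaplacian G w *ᵥ y) a = 0) (a : V) :
    y a ≤ 0 := by
  obtain ⟨b₀, hb₀⟩ := hB
  have : Nonempty V := ⟨a⟩
  obtain ⟨a₀, ha₀⟩ := Finite.exists_max y
  by_contra! hya
  have hmax_pos : 0 < y a₀ := hya.trans_le (ha₀ a)
  have hwalk : ∀ {c d : V}, G.Walk c d → y c = y a₀ → y d = y a₀ := by
    intro c d p
    induction p with
    | nil => exact id
    | cons hcd _ ih =>
      intro hc
      have hcB : _ ∉ B := fun h => hmax_pos.ne' (hc ▸ hyB _ h)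
      exact ih (eq_of_weightedLaplacian_mulVec_eq_zero_of_isMax hpos (hy _ hcB)
        (fun k => hc ▸ ha₀ k) hcd ▸ hc)
  obtain ⟨p⟩ := hconn.preconnected a₀ b₀
  linarith [hwalk p rfl, hyB b₀ hb₀]

theorem det_complBlock_weightedLaplacian_ne_zero (hconn : G.Connected)
    (hpos : ∀ a b, G.Adj a b → 0 < w a b) {B : Set V} [DecidablePred (· ∈ B)]
    (hB : B.Nonempty) : (complBlock (weightedLaplacian G w) B).det ≠ 0 := by
  refine (det_complBlock_ne_zero_iff _ B).2 fun y hyB hy => funext fun a => le_antisymm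
    (nonpos_of_weightedLaplacian_mulVec_eq_zero hconn hpos hB hyB hy a) ?_
  have hneg := nonpos_of_weightedLaplacian_mulVec_eq_zero hconn hpos hB (y := -y)
    (fun b hb => by simp [hyB b hb]) (fun a ha => by simp [mulVec_neg, hy a ha]) a
  simpa using hneg

end Laplacian

@[simp]
theorem some_mem_liftSet {V : Type*} {B : Set V} {a : V} : some a ∈ liftSet B ↔ a ∈ B := by
  simp [liftSet]

@[simp]
theorem none_notMem_liftSet {V : Type*} {B : Set V} : none ∉ liftSet B := by
  simp [liftSet]

section Elimination

variable {V : Type*} [Fintype V] {M : Matrix V V ℝ} {M' : Matrix (Option V) (Option V) ℝ}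

theorem mulVec_some_eq_of_eliminate (hd : M' none none ≠ 0)
    (hM : ∀ a b,
      M a b = M' (some a) (some b) - M' (some a) none * M' none (some b) / M' none none)
    (y : Option V → ℝ) (a : V) :
    (M' *ᵥ y) (some a) =
      (M *ᵥ (y ∘ some)) a + M' (some a) none / M' none none * (M' *ᵥ y) none := by
  have hsum : ∑ b, M' (some a) none * M' none (some b) / M' none none * y (some b) =
      M' (some a) none / M' none none * ∑ b, M' none (some b) * y (some b) := by
    rw [mul_sum]
    exact sum_congr rfl fun _ _ => by ring
  simp only [mulVec, dotProduct, Fintype.sum_option, hM, Function.comp, sub_mul, sum_sub_distrib,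
    hsum]
  field_simp
  ring

theorem mulVec_extend_none_eq_zero (hd : M' none none ≠ 0) (g : V → ℝ) :
    (M' *ᵥ fun o => o.elim (-(∑ b, M' none (some b) * g b) / M' none none) g) none = 0 := by
  simp only [mulVec, dotProduct, Fintype.sum_option, Option.elim]
  field_simp
  ring

variable [DecidableEq V] {B : Set V} [DecidablePred (· ∈ B)]

theorem det_complBlock_liftSet_ne_zero (hd : M' none none ≠ 0)
    (hM : ∀ a b,
      M a b = M' (some a) (some b) - M' (some a) none * M' none (some b) / M' none none)
    (hP : (complBlock M B).det ≠ 0) : (complBlock M' (liftSet B)).det ≠ 0 := by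
  rw [det_complBlock_ne_zero_iff] at hP ⊢
  intro y hyB hy
  have hnone : (M' *ᵥ y) none = 0 := hy none none_notMem_liftSet
  have hsome : y ∘ some = 0 :=
    hP _ (fun b hb => hyB (some b) (some_mem_liftSet.2 hb)) fun a ha => by
      simpa [mulVec_some_eq_of_eliminate hd hM, hnone] using hy (some a) (some_mem_liftSet.not.2 ha)
  have hsome' : ∀ b, y (some b) = 0 := congrFun hsome
  have hy_none : M' none none * y none = 0 := by
    simpa [mulVec, dotProduct, Fintype.sum_option, hsome'] using hnone
  funext o
  cases o with
  | none => exact (mul_eq_zero.1 hy_none).resolve_left hd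
  | some b => exact hsome' b

theorem schurCompl_liftSet_of_eliminate (hd : M' none none ≠ 0)
    (hM : ∀ a b,
      M a b = M' (some a) (some b) - M' (some a) none * M' none (some b) / M' none none)
    (hP : (complBlock M B).det ≠ 0) (i j : B) :
    schurCompl M' (liftSet B) ⟨some i, some_mem_liftSet.2 i.2⟩
      ⟨some j, some_mem_liftSet.2 j.2⟩ = schurCompl M B i j := by
  obtain ⟨g, hgB, hg⟩ := exists_mulVec_eq_zero_of_restrict_eq hP (Pi.single j 1)
  set g' : Option V → ℝ := fun o => o.elim (-(∑ b, M' none (some b) * g b) / M' none none) g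
  have hg'none : (M' *ᵥ g') none = 0 := mulVec_extend_none_eq_zero hd g
  have hg'some : ∀ a, (M' *ᵥ g') (some a) = (M *ᵥ g) a := fun a => by
    rw [mulVec_some_eq_of_eliminate hd hM, hg'none, mul_zero, add_zero]
    rfl
  have hg' : ∀ o ∉ liftSet B, (M' *ᵥ g') o = 0
    | none, _ => hg'none
    | some a, ha => (hg'some a).trans (hg a (some_mem_liftSet.not.1 ha))
  have hg'B : ∀ k : liftSet B,
      g' k = (Pi.single ⟨some j, some_mem_liftSet.2 j.2⟩ 1 : liftSet B → ℝ) k := by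
    rintro ⟨_ | a, ha⟩
    · exact absurd ha none_notMem_liftSet
    · show g a = _
      simpa [Pi.single_apply, Subtype.ext_iff] using hgB ⟨a, some_mem_liftSet.1 ha⟩
  rw [schurCompl_apply_eq_mulVec (det_complBlock_liftSet_ne_zero hd hM hP) hg' hg'B,
    schurCompl_apply_eq_mulVec hP hg hgB, hg'some]

end Elimination

theorem Matrix.ext_of_sum_row_eq_of_offDiag {n R : Type*} [Fintype n] [DecidableEq n]
    [AddCommGroup R] {A B : Matrix n n R} (hsum : ∀ i, ∑ j, A i j = ∑ j, B i j)
    (hoff : ∀ i j, i ≠ j → A i j = B i j) : A = B := by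
  ext i j
  obtain rfl | hij := eq_or_ne i j
  · have h := hsum i
    rw [← add_sum_erase _ _ (mem_univ i), ← add_sum_erase _ _ (mem_univ i),
      sum_congr rfl fun j hj => hoff i j (ne_of_mem_erase hj).symm] at h
    exact add_right_cancel h
  · exact hoff i j hij

section Subdivision

variable {V : Type*} (G : SimpleGraph V) (u v : V)

@[simp]
theorem subdivide_adj_some_some {a b : V} : (subdivide G u v).Adj (some a) (some b) ↔
    G.Adj a b ∧ ¬(a = u ∧ b = v) ∧ ¬(a = v ∧ b = u) := Iff.rfl

@[simp]
theorem subdivide_adj_some_none {a : V} : (subdivide G u v).Adj (some a) none ↔ a = u ∨ a = v :=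
  Iff.rfl

@[simp]
theorem subdivide_adj_none_some {b : V} : (subdivide G u v).Adj none (some b) ↔ b = u ∨ b = v :=
  Iff.rfl

variable [DecidableEq V]

def subdivisionWeight (w : V → V → ℝ) (w₁ w₂ : ℝ) : Option V → Option V → ℝ
  | some a, some b => w a b
  | some a, none => if a = u then w₁ else w₂
  | none, some b => if b = u then w₁ else w₂
  | none, none => 0

def newVertexWeight (w₁ w₂ : ℝ) : V → ℝ := Pi.single u w₁ + Pi.single v w₂

variable {G u v} [Fintype V] [DecidableRel G.Adj] {w : V → V → ℝ} {w₁ w₂ : ℝ}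

theorem sum_newVertexWeight : ∑ a, newVertexWeight u v w₁ w₂ a = w₁ + w₂ := by
  simp [newVertexWeight, sum_add_distrib]

theorem weightedLaplacian_subdivide_some_none (huv : u ≠ v) (a : V) :
    weightedLaplacian (subdivide G u v) (subdivisionWeight u w w₁ w₂) (some a) none =
      -newVertexWeight u v w₁ w₂ a := by
  by_cases hau : a = u
  · subst hau; simp [weightedLaplacian, subdivisionWeight, newVertexWeight, huv]
  by_cases hav : a = v
  · subst hav; simp [weightedLaplacian, subdivisionWeight, newVertexWeight, hau]
  simp [weightedLaplacian, newVertexWeight, hau, hav]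

theorem weightedLaplacian_subdivide_none_some (huv : u ≠ v) (b : V) :
    weightedLaplacian (subdivide G u v) (subdivisionWeight u w w₁ w₂) none (some b) =
      -newVertexWeight u v w₁ w₂ b := by
  by_cases hbu : b = u
  · subst hbu; simp [weightedLaplacian, subdivisionWeight, newVertexWeight, huv]
  by_cases hbv : b = v
  · subst hbv; simp [weightedLaplacian, subdivisionWeight, newVertexWeight, hbu]
  simp [weightedLaplacian, newVertexWeight, hbu, hbv]

theorem weightedLaplacian_subdivide_none_none (huv : u ≠ v) :
    weightedLaplacian (subdivide G u v) (subdivisionWeight u w w₁ w₂) none none =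
      w₁ + w₂ := by
  simp only [weightedLaplacian, of_apply, if_true, sum_filter, Fintype.sum_option,
    (subdivide G u v).irrefl, if_false, zero_add, subdivide_adj_none_some]
  rw [← sum_newVertexWeight (u := u) (v := v)]
  refine sum_congr rfl fun b _ => ?_
  by_cases hbu : b = u
  · subst hbu; simp [subdivisionWeight, newVertexWeight, huv]
  by_cases hbv : b = v
  · subst hbv; simp [subdivisionWeight, newVertexWeight, hbu]
  simp [newVertexWeight, hbu, hbv]

theorem weightedLaplacian_eq_subdivide_sub (huv : G.Adj u v) (hw : w v u = w u v)
    (hd : w₁ + w₂ ≠ 0) (hsplit : w u v * (w₁ + w₂) = w₁ * w₂) :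
    weightedLaplacian G w = of fun a b =>
      weightedLaplacian (subdivide G u v) (subdivisionWeight u w w₁ w₂) (some a) (some b) -
        newVertexWeight u v w₁ w₂ a * newVertexWeight u v w₁ w₂ b / (w₁ + w₂) := by
  apply Matrix.ext_of_sum_row_eq_of_offDiag
  · intro a
    have hrow := weightedLaplacian_sum_row (G := subdivide G u v)
      (w := subdivisionWeight u w w₁ w₂) (some a)
    rw [Fintype.sum_option, weightedLaplacian_subdivide_some_none huv.ne] at hrow
    have hcorr :
        ∑ b, newVertexWeight u v w₁ w₂ a * newVertexWeight u v w₁ w₂ b / (w₁ + w₂) =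
          newVertexWeight u v w₁ w₂ a := by
      rw [← sum_div, ← mul_sum, sum_newVertexWeight, mul_div_cancel_right₀ _ hd]
    simp only [weightedLaplacian_sum_row, of_apply, sum_sub_distrib, hcorr]
    linarith
  · intro a b hab
    simp only [weightedLaplacian, of_apply, hab, if_false, Option.some.injEq,
      subdivide_adj_some_some]
    by_cases huv' : a = u ∧ b = v
    · obtain ⟨rfl, rfl⟩ := huv'
      simp [huv, newVertexWeight, hab, eq_div_iff hd, hsplit]
    by_cases hvu' : a = v ∧ b = u
    · obtain ⟨rfl, rfl⟩ := hvu'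
      simp [huv.symm, newVertexWeight, hab, hw, eq_div_iff hd, hsplit, mul_comm w₂]
    have hprod : newVertexWeight u v w₁ w₂ a * newVertexWeight u v w₁ w₂ b = 0 := by
      simp only [newVertexWeight, Pi.add_apply, Pi.single_apply]
      grind
    simp [huv', hvu', subdivisionWeight, hprod]

end Subdivision

theorem schur_complement_invariant_under_subdivision_general
    {V : Type*} [Fintype V] [DecidableEq V]
    (G : SimpleGraph V) [DecidableRel G.Adj] (hconn : G.Connected)
    (w : V → V → ℝ) (hw : ∀ a b, w a b = w b a)
    (hpos : ∀ a b, G.Adj a b → 0 < w a b)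
    (B : Set V) [DecidablePred (· ∈ B)] (hB : B.Nonempty)
    (u v : V) (huv : G.Adj u v)
    (w₁ w₂ : ℝ) (hw₁ : 0 < w₁) (hw₂ : 0 < w₂)
    (hsplit : 1 / w₁ + 1 / w₂ = 1 / w u v) :
    ∀ i j : B,
      schurCompl
        (weightedLaplacian (subdivide G u v)
          (fun a b =>
            match a, b with
            | some a', some b' => w a' b'
            | some a', none => if a' = u then w₁ else w₂
            | none, some b' => if b' = u then w₁ else w₂
            | none, none => 0))
        (liftSet B)
        ⟨some (i : V), ⟨(i : V), i.2, rfl⟩⟩ ⟨some (j : V), ⟨(j : V), j.2, rfl⟩⟩ =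
      schurCompl (weightedLaplacian G w) B i j := by
  intro i j
  have hd : w₁ + w₂ ≠ 0 := by positivity
  have hwuv : w u v * (w₁ + w₂) = w₁ * w₂ := by
    have := (hpos u v huv).ne'
    field_simp at hsplit
    linear_combination hsplit
  change schurCompl (weightedLaplacian (subdivide G u v) (subdivisionWeight u w w₁ w₂))
    _ _ _ = _
  refine schurCompl_liftSet_of_eliminate ?_ (fun a b => ?_)
    (det_complBlock_weightedLaplacian_ne_zero hconn hpos hB) i j
  · rwa [weightedLaplacian_subdivide_none_none huv.ne]
  · rw [weightedLaplacian_eq_subdivide_sub huv (hw v u) hd hwuv, of_apply,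
      weightedLaplacian_subdivide_some_none huv.ne, weightedLaplacian_subdivide_none_some huv.ne,
      weightedLaplacian_subdivide_none_none huv.ne, neg_mul_neg]

/-- subdividing an edge `{u, v}` of weight `w_e` into two edges of weights
`w₁, w₂` with `1/w₁ + 1/w₂ = 1/w_e` does not change the Schur complement of the weighted
Laplacian with respect to a nonempty proper subset `B` of the original vertices. -/
theorem schur_complement_invariant_under_subdivision
    {V : Type*} [Fintype V] [DecidableEq V]
    (G : SimpleGraph V) [DecidableRel G.Adj] (hconn : G.Connected)
    (w : V → V → ℝ) (hw : ∀ a b, w a b = w b a)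
    (hpos : ∀ a b, G.Adj a b → 0 < w a b)
    (B : Set V) [DecidablePred (· ∈ B)] (hB : B.Nonempty) (hBproper : B ≠ Set.univ)
    (u v : V) (huv : G.Adj u v)
    (w₁ w₂ : ℝ) (hw₁ : 0 < w₁) (hw₂ : 0 < w₂)
    (hsplit : 1 / w₁ + 1 / w₂ = 1 / w u v) :
    ∀ i j : B,
      schurCompl
        (weightedLaplacian (subdivide G u v)
          (fun a b =>
            match a, b with
            | some a', some b' => w a' b'
            | some a', none => if a' = u then w₁ else w₂
            | none, some b' => if b' = u then w₁ else w₂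
            | none, none => 0))
        (liftSet B)
        ⟨some (i : V), ⟨(i : V), i.2, rfl⟩⟩ ⟨some (j : V), ⟨(j : V), j.2, rfl⟩⟩ =
      schurCompl (weightedLaplacian G w) B i j :=
  schur_complement_invariant_under_subdivision_general G hconn w hw hpos B hB u v huv w₁ w₂ hw₁ hw₂
    hsplit
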